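/- Let 𝒜 be a locally finite L-structure and ℬ a locally finite L'-structure such that each of L and L' contains a binary relation symbol interpreted in the respective structure as a linear order of its domain. Suppose 𝒜 is a semi-retract of ℬ and ℬ has the Ramsey property (for every pair of finitely generated substructures A₀, B₀ of ℬ and every integer r ≥ 2, ℬ → (B₀)^{A₀}_r). Then 𝒜 has the Ramsey property: for every pair of finite substructures A, B of 𝒜 and every integer r ≥ 2, 𝒜 → (B)^A_r. -/

import Mathlib

/-!
Color a copy of `A` in `M` through the substructure `A* = ⟨g '' A⟩` of `N`: an embedding `e` of
`A*` into `N` gets the color of `⟨f (e (g a)) | a ∈ A⟩`. Since `A*` is finite and linearly ordered,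
an embedding is determined by its range, so this is a coloring of copies of `A*`, and the Ramsey
property of `N` yields an embedding `h` of `B* = ⟨g '' B⟩` on which it is constant. The map
`f ∘ h ∘ g` preserves quantifier-free types on `B`, so it embeds `B` onto some `B' ≤ M`. A copy of
`A` inside `B'` is the image of a tuple of `B` of the same quantifier-free type as an enumeration
of `A`; applying `g` and passing to generated substructures turns it into an embedding of `A*`
into `B*`, whose composite with `h` carries the color of the copy.
-/

open FirstOrder FirstOrder.Language

/-- Two same-length tuples have the same quantifier-free type over ∅. -/
def SameQfType (L : FirstOrder.Language) (M : Type*) [L.Structure M] {n : ℕ}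
    (x y : Fin n → M) : Prop :=
  ∀ φ : L.Formula (Fin n), φ.IsQF → (φ.Realize x ↔ φ.Realize y)

/-- A qftp-respecting injection between structures in possibly different languages. -/
def QftpRespecting (L L' : FirstOrder.Language) (M N : Type*) [L.Structure M] [L'.Structure N]
    (h : M → N) : Prop :=
  Function.Injective h ∧
    ∀ (n : ℕ) (x y : Fin n → M), SameQfType L M x y → SameQfType L' N (h ∘ x) (h ∘ y)

/-- `(g, f)` is a semi-retraction between `M` and `N`: both maps are qftp-respecting
injections and `f ∘ g` is qftp-preserving (equivalently, an `L`-embedding of `M` into `M`). -/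
def IsSemiRetraction (L L' : FirstOrder.Language) (M N : Type*)
    [L.Structure M] [L'.Structure N] (g : M → N) (f : N → M) : Prop :=
  QftpRespecting L L' M N g ∧ QftpRespecting L' L N M f ∧
    ∀ (n : ℕ) (x : Fin n → M), SameQfType L M x (f ∘ g ∘ x)

/-- `M` is locally finite: every finitely generated substructure is finite. -/
def StructLocallyFinite (L : FirstOrder.Language) (M : Type*) [L.Structure M] : Prop :=
  ∀ S : L.Substructure M, S.FG → (S : Set M).Finite

/-- `M → (B)^A_{r,d}` for substructures. -/
def ArrowSub (L : FirstOrder.Language) (M : Type*) [L.Structure M]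
    (A B : L.Substructure M) (r d : ℕ) : Prop :=
  ∀ c : L.Substructure M → Fin r, ∃ B' : L.Substructure M,
    Nonempty (B' ≃[L] B) ∧
      (c '' {A' : L.Substructure M | A' ≤ B' ∧ Nonempty (A' ≃[L] A)}).ncard ≤ d

/-- `M →ᵉ (B)^A_{r,d}` for embeddings. -/
def ArrowEmb (L : FirstOrder.Language) (M : Type*) [L.Structure M]
    (A B : L.Substructure M) (r d : ℕ) : Prop :=
  ∀ c : (A ↪[L] M) → Fin r, ∃ h : B ↪[L] M,
    (c '' {j : A ↪[L] M | ∃ e : A ↪[L] B, j = h.comp e}).ncard ≤ d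

/-- A structure is rigid if its only automorphism is the identity. -/
def IsRigidStructure (L : FirstOrder.Language) (M : Type*) [L.Structure M] : Prop :=
  ∀ σ : M ≃[L] M, ∀ x : M, σ x = x

namespace FirstOrder.Language.BoundedFormula

variable {L : FirstOrder.Language} {α β : Type*} {n : ℕ}

theorem IsAtomic.subst {φ : L.BoundedFormula α n} (h : φ.IsAtomic) (tf : α → L.Term β) :
    (φ.subst tf).IsAtomic :=
  IsAtomic.recOn h (fun _ _ => IsAtomic.equal _ _) fun _ _ => IsAtomic.rel _ _

theorem IsQF.subst {φ : L.BoundedFormula α n} (h : φ.IsQF) (tf : α → L.Term β) :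
    (φ.subst tf).IsQF :=
  IsQF.recOn h isQF_bot (fun h => (h.subst tf).isQF) fun _ _ h₁ h₂ => h₁.imp h₂

end FirstOrder.Language.BoundedFormula

section

variable {L : FirstOrder.Language} {M : Type*} [L.Structure M]

namespace SameQfType

variable {n : ℕ} {a b c : Fin n → M}

theorem symm (h : SameQfType L M a b) : SameQfType L M b a := fun φ hφ => (h φ hφ).symm

theorem trans (h₁ : SameQfType L M a b) (h₂ : SameQfType L M b c) : SameQfType L M a c :=
  fun φ hφ => (h₁ φ hφ).trans (h₂ φ hφ)

theorem realize_terms (h : SameQfType L M a b) {m : ℕ} (t : Fin m → L.Term (Fin n)) :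
    SameQfType L M (fun i => (t i).realize a) (fun i => (t i).realize b) := fun φ hφ => by
  simpa only [Formula.Realize, BoundedFormula.realize_subst] using h _ (hφ.subst t)

theorem realize_eq_iff (h : SameQfType L M a b) (t₁ t₂ : L.Term (Fin n)) :
    t₁.realize a = t₂.realize a ↔ t₁.realize b = t₂.realize b := by
  simpa only [Formula.realize_equal] using h (t₁.equal t₂) (BoundedFormula.IsAtomic.equal _ _).isQF

theorem relMap_iff (h : SameQfType L M a b) (R : L.Relations n) :
    Structure.RelMap R a ↔ Structure.RelMap R b := by
  simpa only [Formula.realize_rel, Term.realize_var] using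
    h (R.formula Term.var) (BoundedFormula.IsAtomic.rel _ _).isQF

end SameQfType

theorem sameQfType_embedding_comp {P : Type*} [L.Structure P] (e₁ e₂ : P ↪[L] M) {n : ℕ}
    (u : Fin n → P) : SameQfType L M (e₁ ∘ u) (e₂ ∘ u) := fun φ hφ => by
  have key (e : P ↪[L] M) : φ.Realize (e ∘ u) ↔ φ.Realize u := by
    rw [Formula.Realize, Formula.Realize, ← hφ.realize_embedding e,
      Subsingleton.elim (e ∘ (default : Fin 0 → P)) default]
  exact (key e₁).trans (key e₂).symm

namespace FirstOrder.Language.Substructure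

theorem mem_closure_range_iff {α : Type*} {v : α → M} {x : M} :
    x ∈ closure L (Set.range v) ↔ ∃ t : L.Term α, t.realize v = x := by
  refine ⟨fun hx => ?_, fun ⟨t, ht⟩ => ht ▸ t.realize_mem v fun a => subset_closure ⟨a, rfl⟩⟩
  obtain ⟨t, rfl⟩ := mem_closure_iff_exists_term.mp hx
  refine ⟨t.relabel (Set.rangeSplitting v), ?_⟩
  rw [Term.realize_relabel]
  exact congrArg t.realize (funext (Set.apply_rangeSplitting v))

def embeddingOfSameQfType {S : L.Substructure M} (φ : S → M)
    (hφ : ∀ (n : ℕ) (x : Fin n → S), SameQfType L M (fun i => (x i : M)) (φ ∘ x)) :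
    S ↪[L] M where
  toFun := φ
  inj' x y hxy := Subtype.ext <|
    ((hφ 2 ![x, y]).realize_eq_iff (Term.var 0) (Term.var 1)).2 (by simpa using hxy)
  map_fun' {n} f x := by
    have h := (hφ (n + 1) (Fin.cons (Structure.funMap f x) x)).realize_eq_iff (Term.var 0)
      (Term.func f fun i => Term.var i.succ)
    exact h.1 rfl
  map_rel' R x := ((hφ _ x).relMap_iff R).symm

end FirstOrder.Language.Substructure

open Substructure in
theorem SameQfType.exists_embedding_closure {n : ℕ} {a b : Fin n → M} (h : SameQfType L M a b) :
    ∃ e : closure L (Set.range a) ↪[L] closure L (Set.range b),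
      ∀ i, (e ⟨a i, subset_closure ⟨i, rfl⟩⟩ : M) = b i := by
  choose t ht using fun x : closure L (Set.range a) => mem_closure_range_iff.mp x.2
  have hφ (m : ℕ) (x : Fin m → closure L (Set.range a)) :
      SameQfType L M (fun i => (x i : M)) fun i => (t (x i)).realize b := by
    simpa only [ht] using h.realize_terms fun i => t (x i)
  refine ⟨(embeddingOfSameQfType _ hφ).codRestrict _ fun x => mem_closure_range_iff.mpr ⟨t x, rfl⟩,
    fun i => ?_⟩
  exact (h.realize_eq_iff (t _) (Term.var i)).1 (ht _)

end

namespace FirstOrder.Language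

variable {L : FirstOrder.Language} {M : Type*} [L.Structure M]

theorem Embedding.relMap_pair_iff {P : Type*} [L.Structure P] (e : P ↪[L] M) (R : L.Relations 2)
    (x y : P) : Structure.RelMap R ![e x, e y] ↔ Structure.RelMap R ![x, y] := by
  have h := e.map_rel R ![x, y]
  rwa [show ⇑e ∘ ![x, y] = ![e x, e y] from funext fun i => by fin_cases i <;> rfl] at h

-- An order automorphism of a finite linear order is trivial.
theorem Embedding.range_injective_of_isLinearOrder {P : Type*} [L.Structure P] [Finite P]
    (R : L.Relations 2) (hR : IsLinearOrder M fun x y => Structure.RelMap R ![x, y]) :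
    Function.Injective fun e : P ↪[L] M => e.toHom.range := by
  intro e₁ e₂ hrange
  let _ : LinearOrder M :=
    { le := fun x y => Structure.RelMap R ![x, y]
      le_refl := hR.refl
      le_trans := fun _ _ _ => hR.trans _ _ _
      le_antisymm := fun _ _ => hR.antisymm _ _
      le_total := hR.total
      toDecidableLE := Classical.decRel _ }
  let _ : LinearOrder P := LinearOrder.lift' e₁ e₁.injective
  let toOrderEmbedding (e : P ↪[L] M) : P ↪o M :=
    OrderEmbedding.ofMapLEIff e fun x y => (e.relMap_pair_iff R x y).trans
      (e₁.relMap_pair_iff R x y).symm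
  have h : toOrderEmbedding e₁ = toOrderEmbedding e₂ := by
    rw [← OrderEmbedding.range_inj]
    exact congrArg SetLike.coe hrange
  exact Embedding.ext fun x => DFunLike.congr_fun h x

/-- A copy of `A` is colored by the color of the unique embedding of `A` onto it. -/
theorem arrowEmb_of_arrowSub {A B : L.Substructure M} {r d : ℕ}
    (hA : Function.Injective fun e : A ↪[L] M => e.toHom.range) (h : ArrowSub L M A B r d) :
    ArrowEmb L M A B r d := by
  intro c
  obtain ⟨B', ⟨θ⟩, hB'⟩ := h (Function.extend (fun e => e.toHom.range) c fun _ => c A.subtype)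
  refine ⟨B'.subtype.comp θ.symm.toEmbedding, (Set.ncard_le_ncard ?_ (Set.toFinite _)).trans hB'⟩
  rintro _ ⟨_, ⟨e, rfl⟩, rfl⟩
  refine ⟨_, ⟨?_, ⟨(Embedding.equivRange _).symm⟩⟩, hA.extend_apply _ _ _⟩
  rintro _ ⟨x, rfl⟩
  exact (θ.symm (e x)).2

end FirstOrder.Language

namespace IsSemiRetraction

open Substructure

variable {L L' : FirstOrder.Language} {M N : Type*} [L.Structure M] [L'.Structure N]
  {g : M → N} {f : N → M}

theorem exists_embedding_comp (hgf : IsSemiRetraction L L' M N g f) {B : L.Substructure M}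
    {S : L'.Substructure N} (hB : ∀ x ∈ B, g x ∈ S) (h : S ↪[L'] N) :
    ∃ φ : B ↪[L] M, ∀ x : B, φ x = f (h ⟨g x, hB x x.2⟩) := by
  refine ⟨embeddingOfSameQfType (fun x => f (h ⟨g x, hB x x.2⟩)) fun n x => ?_, fun _ => rfl⟩
  exact (hgf.2.2 n _).trans
    (hgf.2.1.2 n _ _ (sameQfType_embedding_comp S.subtype h fun i => ⟨g (x i), hB _ (x i).2⟩))

theorem exists_embedding_closure_of_mem_range (hgf : IsSemiRetraction L L' M N g f)
    {B : L.Substructure M} {S : L'.Substructure N} (hB : ∀ x ∈ B, g x ∈ S) (h : S ↪[L'] N)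
    {φ : B ↪[L] M} (hφ : ∀ x : B, φ x = f (h ⟨g x, hB x x.2⟩)) {n : ℕ} {a a' : Fin n → M}
    (haa' : SameQfType L M a a') (ha' : ∀ i, a' i ∈ Set.range φ) :
    ∃ e : closure L' (Set.range (g ∘ a)) ↪[L'] S,
      ∀ i, f (h (e ⟨g (a i), subset_closure (Set.mem_range_self i)⟩)) = a' i := by
  choose b hb using ha'
  obtain rfl : ⇑φ ∘ b = a' := funext hb
  have hab : SameQfType L M a fun i => (b i : M) :=
    haa'.trans (sameQfType_embedding_comp B.subtype φ b).symm
  obtain ⟨ε, hε⟩ := (hgf.1.2 n _ _ hab).exists_embedding_closure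
  have hle : closure L' (Set.range (g ∘ fun i => (b i : M))) ≤ S :=
    closure_le.mpr (Set.range_subset_iff.mpr fun i => hB _ (b i).2)
  refine ⟨(inclusion hle).comp ε, fun i => ?_⟩
  rw [Function.comp_apply, hφ]
  exact congrArg (f ∘ h) (Subtype.ext (hε i))

theorem arrowSub_of_arrowEmb (hgf : IsSemiRetraction L L' M N g f) {A B : L.Substructure M}
    (hA : (A : Set M).Finite) {r d : ℕ}
    (hN : ArrowEmb L' N (closure L' (g '' A)) (closure L' (g '' B)) r d) :
    ArrowSub L M A B r d := by
  have := hA.to_subtype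
  let a₀ := (Finite.equivFin A).symm
  let a : Fin (Nat.card A) → M := (↑) ∘ a₀
  have hga : g '' A = Set.range (g ∘ a) := by
    rw [Set.range_comp, a₀.surjective.range_comp, Subtype.range_coe]
  rw [hga] at hN
  intro c
  obtain ⟨h, hmono⟩ := hN fun e =>
    c (closure L (Set.range fun i => f (e ⟨g (a i), subset_closure (Set.mem_range_self i)⟩)))
  have hB (x : M) (hx : x ∈ B) : g x ∈ closure L' (g '' B) := subset_closure ⟨x, hx, rfl⟩
  obtain ⟨φ, hφ⟩ := hgf.exists_embedding_comp hB h
  refine ⟨φ.toHom.range, ⟨φ.equivRange.symm⟩, (Set.ncard_le_ncard ?_ (Set.toFinite _)).trans hmono⟩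
  rintro _ ⟨A', ⟨hA'φ, ⟨ν⟩⟩, rfl⟩
  let a' : Fin (Nat.card A) → M := (↑) ∘ ν.symm ∘ a₀
  have haa' : SameQfType L M a a' :=
    sameQfType_embedding_comp A.subtype (A'.subtype.comp ν.symm.toEmbedding) a₀
  obtain ⟨e, he⟩ := hgf.exists_embedding_closure_of_mem_range hB h hφ haa'
    fun i => hA'φ (ν.symm (a₀ i)).2
  refine ⟨h.comp e, ⟨e, rfl⟩, congrArg c ?_⟩
  have hrange : Set.range a' = A' := by
    rw [← Subtype.range_coe (s := (A' : Set M)), ← ν.symm.surjective.range_comp,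
      ← a₀.surjective.range_comp]
    rfl
  simp only [Embedding.comp_apply, he, hrange, closure_eq]

end IsSemiRetraction

theorem semiRetraction_transfers_RP_ordered_general
    {L L' : FirstOrder.Language} {M N : Type*} [L.Structure M] [L'.Structure N]
    (hlfB : StructLocallyFinite L' N)
    (hordB : ∃ R : L'.Relations 2, IsLinearOrder N fun x y => Structure.RelMap R ![x, y])
    (hsr : ∃ (g : M → N) (f : N → M), IsSemiRetraction L L' M N g f)
    (hRP : ∀ A₀ B₀ : L'.Substructure N, A₀.FG → B₀.FG → ∀ r : ℕ, 2 ≤ r →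
      ArrowSub L' N A₀ B₀ r 1) :
    ∀ A B : L.Substructure M, (A : Set M).Finite → (B : Set M).Finite → ∀ r : ℕ, 2 ≤ r →
      ArrowSub L M A B r 1 := by
  intro A B hA hB r hr
  obtain ⟨R, hR⟩ := hordB
  obtain ⟨g, f, hgf⟩ := hsr
  have hAfg : (Substructure.closure L' (g '' A)).FG := Substructure.fg_closure (hA.image g)
  have hBfg : (Substructure.closure L' (g '' B)).FG := Substructure.fg_closure (hB.image g)
  have := (hlfB _ hAfg).to_subtype
  exact hgf.arrowSub_of_arrowEmb hA <| arrowEmb_of_arrowSub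
    (Embedding.range_injective_of_isLinearOrder R hR) (hRP _ _ hAfg hBfg r hr)

/-- Corollary 2.31 / `transfer`: if `𝒜` and `ℬ` are locally finite structures
each carrying a distinguished linear order given by a binary relation symbol of its language,
`𝒜` is a semi-retract of `ℬ`, and `ℬ` has the Ramsey property, then `𝒜` has the Ramsey
property. -/
theorem semiRetraction_transfers_RP_ordered
    {L L' : FirstOrder.Language} {M N : Type*} [L.Structure M] [L'.Structure N]
    (hlfA : StructLocallyFinite L M) (hlfB : StructLocallyFinite L' N)
    (hordA : ∃ R : L.Relations 2, IsLinearOrder M fun x y => Structure.RelMap R ![x, y])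
    (hordB : ∃ R : L'.Relations 2, IsLinearOrder N fun x y => Structure.RelMap R ![x, y])
    (hsr : ∃ (g : M → N) (f : N → M), IsSemiRetraction L L' M N g f)
    (hRP : ∀ A₀ B₀ : L'.Substructure N, A₀.FG → B₀.FG → ∀ r : ℕ, 2 ≤ r →
      ArrowSub L' N A₀ B₀ r 1) :
    ∀ A B : L.Substructure M, (A : Set M).Finite → (B : Set M).Finite → ∀ r : ℕ, 2 ≤ r →
      ArrowSub L M A B r 1 :=
  semiRetraction_transfers_RP_ordered_general hlfB hordB hsr hRP
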